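/- The 5-dimensional nilpotent commutative associative algebra A₀₅ does not degenerate to A₁₅: the structure λ of A₁₅ does NOT lie in the closure of the GL(5,ℂ)-orbit O(μ) of the structure μ of A₀₅ (closure in the standard topology on the space of bilinear maps ℂ⁵ × ℂ⁵ → ℂ⁵). -/

import Mathlib

open ContinuousLinearMap

/-- The underlying space `ℂⁿ`. -/
abbrev Vn (n : ℕ) := Fin n → ℂ

/-- The space of bilinear maps `ℂⁿ × ℂⁿ → ℂⁿ` (as continuous linear maps in two
arguments), carrying its standard topology as a finite-dimensional complex vector space. -/
abbrev Bil (n : ℕ) := Vn n →L[ℂ] Vn n →L[ℂ] Vn n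

/-- The action of `GL(n, ℂ)` on bilinear maps: `(g · μ)(x, y) = g (μ (g⁻¹ x) (g⁻¹ y))`. -/
noncomputable def act {n : ℕ} (g : Vn n ≃L[ℂ] Vn n) (μ : Bil n) : Bil n :=
  ((compL ℂ (Vn n) (Vn n) (Vn n)).flip (g.symm : Vn n →L[ℂ] Vn n)).comp
    (((compL ℂ (Vn n) (Vn n) (Vn n)) (g : Vn n →L[ℂ] Vn n)).comp
      (μ.comp (g.symm : Vn n →L[ℂ] Vn n)))

@[simp] lemma act_apply {n : ℕ} (g : Vn n ≃L[ℂ] Vn n) (μ : Bil n) (x y : Vn n) :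
    act g μ x y = g (μ (g.symm x) (g.symm y)) := rfl

/-- The orbit `O(μ)` of a bilinear map under the `GL(n, ℂ)`-action. -/
noncomputable def orbit {n : ℕ} (μ : Bil n) : Set (Bil n) :=
  {ν | ∃ g : Vn n ≃L[ℂ] Vn n, ν = act g μ}

/-- The standard basis `e₁, …, e₅` of `ℂ⁵` (zero-indexed: `e i` is `e_{i+1}`). -/
def e (i : Fin 5) : Vn 5 := Pi.single i 1

/-- Multiplication table of the algebra `𝐀05` (entry `(i, j)` is `eᵢ · eⱼ`). -/
def tblA05 : Fin 5 → Fin 5 → Vn 5 :=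
  ![![e 1, e 2, e 3, 0, 0],
   ![e 2, e 3, 0, 0, 0],
   ![e 3, 0, 0, 0, 0],
   ![0, 0, 0, 0, 0],
   ![0, 0, 0, 0, 0]]

/-- Multiplication table of the algebra `𝐀15` (entry `(i, j)` is `eᵢ · eⱼ`). -/
def tblA15 : Fin 5 → Fin 5 → Vn 5 :=
  ![![0, e 2, 0, 0, 0],
   ![e 2, 0, 0, 0, 0],
   ![0, 0, 0, 0, 0],
   ![0, 0, 0, e 4, 0],
   ![0, 0, 0, 0, 0]]

/-!
For a bilinear map `ν`, vectors `x₁, x₂, x₃` and a functional `φ`, the determinant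
`c_ν(φ) = det (φ (ν xᵢ xⱼ))` is a cubic form in `φ`. For `𝐀05` the form `φ ∘ μ` only sees the
coordinates along `e₁, e₂, e₃`, where its Gram matrix is the Hankel matrix of
`(φ e₂, φ e₃, φ e₄)`; so `c_μ(φ) = -(φ e₄)³ · det(x)²` is a constant times the cube of a linear
form. The `GL₅`-action only transforms `φ` and the `xᵢ` linearly, so this persists on the whole
orbit, and being such a cube is detected by the closed condition
`(c(a + b) - c(a) - c(b))³ = 27 c(a) c(b) c(a + b)`. For `𝐀15` and `x = (e₁, e₂, e₄)` one gets
`c_λ(φ) = -(φ e₃)² φ e₅`, which violates it for the coordinate functionals `a, b` of `e₃, e₅`.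
-/

-- `(p + q)³ - p³ - q³ = 3pq(p + q)` for the values `κ p³, κ q³` of a cube `κ ℓ³`.
def cubeObstruction {R M : Type*} [CommRing R] [Add M] (c : M → R) (a b : M) : R :=
  (c (a + b) - c a - c b) ^ 3 - 27 * c a * c b * c (a + b)

theorem cubeObstruction_eq_zero {R M : Type*} [CommRing R] [AddCommMonoid M] {c : M → R}
    {κ : R} (ℓ : M →+ R) (hc : ∀ f, c f = κ * ℓ f ^ 3) (a b : M) :
    cubeObstruction c a b = 0 := by
  simp only [cubeObstruction, hc, map_add]
  ring

theorem Continuous.cubeObstruction {X R M : Type*} [TopologicalSpace X] [CommRing R]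
    [TopologicalSpace R] [IsTopologicalRing R] [Add M] {c : X → M → R}
    (hc : ∀ f, Continuous fun ν => c ν f) (a b : M) :
    Continuous fun ν => cubeObstruction (c ν) a b := by
  have := hc a
  have := hc b
  have := hc (a + b)
  unfold _root_.cubeObstruction
  fun_prop

noncomputable def gramDet {n k : ℕ} (ν : Bil n) (x : Fin k → Vn n) (φ : Module.Dual ℂ (Vn n)) :
    ℂ :=
  (Matrix.of fun i j => φ (ν (x i) (x j))).det

theorem gramDet_act {n k : ℕ} (g : Vn n ≃L[ℂ] Vn n) (ν : Bil n) (x : Fin k → Vn n)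
    (φ : Module.Dual ℂ (Vn n)) :
    gramDet (act g ν) x φ = gramDet ν (g.symm ∘ x) (φ ∘ₗ (g : Vn n →ₗ[ℂ] Vn n)) := rfl

theorem continuous_gramDet {n k : ℕ} (x : Fin k → Vn n) (φ : Module.Dual ℂ (Vn n)) :
    Continuous fun ν : Bil n => gramDet ν x φ := by
  refine Continuous.matrix_det (continuous_matrix fun i j => ?_)
  exact φ.continuous_of_finiteDimensional.comp
    ((ContinuousLinearMap.apply ℂ _ (x j)).continuous.comp
      (ContinuousLinearMap.apply ℂ _ (x i)).continuous)

theorem apply_eq_sum_e (ν : Bil 5) (x y : Vn 5) :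
    ν x y = ∑ i, ∑ j, (x i * y j) • ν (e i) (e j) := by
  conv_lhs => rw [pi_eq_sum_univ' x, pi_eq_sum_univ' y]
  simp only [map_sum, map_smul, sum_apply, smul_apply, Finset.smul_sum, smul_smul]
  rw [Finset.sum_comm]
  simp only [mul_comm]
  rfl

section A05

variable {μ : Bil 5} (hμ : ∀ i j : Fin 5, μ (e i) (e j) = tblA05 i j)
include hμ

theorem dual_apply_A05 (φ : Module.Dual ℂ (Vn 5)) (x y : Vn 5) :
    φ (μ x y) = x 0 * y 0 * φ (e 1) + (x 0 * y 1 + x 1 * y 0) * φ (e 2)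
      + (x 0 * y 2 + x 2 * y 0 + x 1 * y 1) * φ (e 3) := by
  simp [apply_eq_sum_e μ x y, hμ, Fin.sum_univ_five, tblA05]
  ring

theorem gramDet_A05 (x : Fin 3 → Vn 5) (φ : Module.Dual ℂ (Vn 5)) :
    gramDet μ x φ =
      -φ (e 3) ^ 3 * (Matrix.of fun i j : Fin 3 => x i (Fin.castLE (by norm_num) j)).det ^ 2 := by
  simp [gramDet, Matrix.det_fin_three, dual_apply_A05 hμ]
  ring

theorem gramDet_eq_cube_of_mem_orbit {ν : Bil 5} (hν : ν ∈ orbit μ) (x : Fin 3 → Vn 5) :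
    ∃ κ : ℂ, ∃ ℓ : Module.Dual ℂ (Vn 5) →+ ℂ, ∀ φ, gramDet ν x φ = κ * ℓ φ ^ 3 := by
  obtain ⟨g, rfl⟩ := hν
  refine ⟨-(Matrix.of fun i j : Fin 3 => g.symm (x i) (Fin.castLE (by norm_num) j)).det ^ 2,
    (Module.Dual.eval ℂ _ (g (e 3))).toAddMonoidHom, fun φ => ?_⟩
  rw [gramDet_act, gramDet_A05 hμ]
  simp
  ring

end A05

section A15

variable {lam : Bil 5} (hlam : ∀ i j : Fin 5, lam (e i) (e j) = tblA15 i j)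
include hlam

theorem gramDet_A15 (φ : Module.Dual ℂ (Vn 5)) :
    gramDet lam ![e 0, e 1, e 3] φ = -φ (e 2) ^ 2 * φ (e 4) := by
  simp [gramDet, Matrix.det_fin_three, hlam, tblA15, sq]

theorem cubeObstruction_gramDet_A15 :
    cubeObstruction (gramDet lam ![e 0, e 1, e 3]) (LinearMap.proj 2) (LinearMap.proj 4) = -1 := by
  simp only [cubeObstruction, gramDet_A15 hlam]
  norm_num [e, Pi.single_apply, Fin.ext_iff]

end A15

/-- The $5$-dimensional nilpotent commutative associative algebra `𝐀05` does not degenerate to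
`𝐀15`: the structure `λ` of `𝐀15` does NOT lie in the closure of
the `GL(5, ℂ)`-orbit `O(μ)` of the structure `μ` of `𝐀05`. -/
theorem A05_not_deg_A15 (μ lam : Bil 5)
    (hμ : ∀ i j : Fin 5, μ (e i) (e j) = tblA05 i j)
    (hlam : ∀ i j : Fin 5, lam (e i) (e j) = tblA15 i j) :
    lam ∉ closure (orbit μ) := by
  let Z : Set (Bil 5) :=
    {ν | cubeObstruction (gramDet ν ![e 0, e 1, e 3]) (LinearMap.proj 2) (LinearMap.proj 4) = 0}
  have horbit : orbit μ ⊆ Z := fun ν hν => by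
    obtain ⟨κ, ℓ, hcube⟩ := gramDet_eq_cube_of_mem_orbit hμ hν ![e 0, e 1, e 3]
    exact cubeObstruction_eq_zero ℓ hcube _ _
  have hclosed : IsClosed Z :=
    isClosed_eq (Continuous.cubeObstruction (continuous_gramDet _) _ _) continuous_const
  intro hmem
  simpa [Z, cubeObstruction_gramDet_A15 hlam] using closure_minimal horbit hclosed hmem
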